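/- Let V(z) = c·e^{az} for z ≥ 0 with constants c, a > 0, and let ρ be a symmetric probability density on ℝ. Then the Metropolis update operator satisfies (P_A V)(z) = α·V(z) + K(z) where α = 1/2 + ∫_0^∞ ρ(γ)e^{-aγ}dγ and K(z) = ∫_0^∞ ρ(γ) e^{−V(z)(e^{aγ}−1)} V(z)(e^{aγ}−1) dγ, and 0 ≤ K(z) ≤ 1/(2e) for all z ≥ 0. -/

import Mathlib

open MeasureTheory Real Set

/-- The Metropolis acceptance probability for potential V. -/
noncomputable def metropolisAccept (V : ℝ → ℝ) (z z' : ℝ) : ℝ :=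
  min 1 (Real.exp (-(V z' - V z)))

/-- The Metropolis update operator for proposal density ρ and potential V. -/
noncomputable def metropolisOp (ρ V : ℝ → ℝ) (z : ℝ) : ℝ :=
  ∫ γ : ℝ, ρ γ * (metropolisAccept V z (z + γ) * V (z + γ)
    + (1 - metropolisAccept V z (z + γ)) * V z)

/-- `x * exp (-x) ≤ exp (-1)` for all real `x`. -/
lemma xexp_le (x : ℝ) : x * Real.exp (-x) ≤ Real.exp (-1) := by
  have h : x ≤ Real.exp (x - 1) := by
    have := Real.add_one_le_exp (x - 1)
    linarith
  calc x * Real.exp (-x) ≤ Real.exp (x - 1) * Real.exp (-x) := by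
        apply mul_le_mul_of_nonneg_right h (Real.exp_nonneg _)
    _ = Real.exp (-1) := by
        rw [← Real.exp_add]; ring_nf

/-- for the exponential potential V(z) = c e^{az}, the Metropolis
    operator satisfies (P_A V)(z) = α V(z) + K(z) with
    α = 1/2 + ∫_0^∞ ρ(γ) e^{-aγ} dγ and
    K(z) = ∫_0^∞ ρ(γ) e^{-V(z)(e^{aγ}-1)} V(z)(e^{aγ}-1) dγ ∈ [0, 1/(2e)]. -/
theorem metropolis_exponential_potential_decomposition
    (ρ : ℝ → ℝ) (c a : ℝ) (hc : 0 < c) (ha : 0 < a)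
    (hsymm : ∀ γ : ℝ, ρ (-γ) = ρ γ)
    (hρnonneg : ∀ γ : ℝ, 0 ≤ ρ γ)
    (hρmeas : Measurable ρ)
    (hρint : Integrable ρ)
    (hρnorm : ∫ γ : ℝ, ρ γ = 1) :
    ∀ z : ℝ, 0 ≤ z →
      (metropolisOp ρ (fun w => c * Real.exp (a * w)) z
          = (1 / 2 + ∫ γ in Ioi (0 : ℝ), ρ γ * Real.exp (-a * γ))
              * (c * Real.exp (a * z))
            + ∫ γ in Ioi (0 : ℝ), ρ γ
                * (Real.exp (-(c * Real.exp (a * z)) * (Real.exp (a * γ) - 1))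
                  * ((c * Real.exp (a * z)) * (Real.exp (a * γ) - 1))))
      ∧ 0 ≤ ∫ γ in Ioi (0 : ℝ), ρ γ
            * (Real.exp (-(c * Real.exp (a * z)) * (Real.exp (a * γ) - 1))
              * ((c * Real.exp (a * z)) * (Real.exp (a * γ) - 1)))
      ∧ (∫ γ in Ioi (0 : ℝ), ρ γ
            * (Real.exp (-(c * Real.exp (a * z)) * (Real.exp (a * γ) - 1))
              * ((c * Real.exp (a * z)) * (Real.exp (a * γ) - 1))))
          ≤ 1 / (2 * Real.exp 1) := by
  intro z hz
  set V : ℝ → ℝ := fun w => c * Real.exp (a * w) with hV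
  set v : ℝ := c * Real.exp (a * z) with hvdef
  have hv : 0 < v := mul_pos hc (Real.exp_pos _)
  -- basic facts about V
  have hVval : ∀ γ : ℝ, V (z + γ) = v * Real.exp (a * γ) := by
    intro γ
    simp only [hV, hvdef, mul_add, Real.exp_add]
    ring
  have hVpos : ∀ w : ℝ, 0 < V w := fun w => mul_pos hc (Real.exp_pos _)
  -- acceptance probability on each side
  have hacc_le : ∀ γ : ℝ, γ ≤ 0 → metropolisAccept V z (z + γ) = 1 := by
    intro γ hγ
    apply min_eq_left
    rw [Real.one_le_exp_iff]
    have : V (z + γ) ≤ V z := by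
      rw [hVval]
      have : Real.exp (a * γ) ≤ 1 := by
        rw [Real.exp_le_one_iff]
        exact mul_nonpos_of_nonneg_of_nonpos ha.le hγ
      nlinarith [hVpos z, Real.exp_pos (a * γ)]
    linarith
  have hacc_gt : ∀ γ : ℝ, 0 ≤ γ →
      metropolisAccept V z (z + γ) = Real.exp (-(v * (Real.exp (a * γ) - 1))) := by
    intro γ hγ
    have h1 : (1 : ℝ) ≤ Real.exp (a * γ) := by
      rw [Real.one_le_exp_iff]; positivity
    have hdiff : V (z + γ) - V z = v * (Real.exp (a * γ) - 1) := by
      rw [hVval]; simp only [hvdef]; ring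
    unfold metropolisAccept
    rw [hdiff]
    apply min_eq_right
    rw [Real.exp_le_one_iff]
    simp only [neg_nonpos]
    nlinarith
  -- the integrand
  set f : ℝ → ℝ := fun γ => ρ γ * (metropolisAccept V z (z + γ) * V (z + γ)
    + (1 - metropolisAccept V z (z + γ)) * V z) with hf
  have hacc_mem : ∀ γ : ℝ, metropolisAccept V z (z + γ) ∈ Set.Icc (0:ℝ) 1 := by
    intro γ
    constructor
    · exact le_min zero_le_one (Real.exp_nonneg _)
    · exact min_le_left _ _
  have hf_nonneg : ∀ γ : ℝ, 0 ≤ f γ := by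
    intro γ
    obtain ⟨h0, h1⟩ := hacc_mem γ
    have := (hVpos (z + γ)).le
    have := (hVpos z).le
    apply mul_nonneg (hρnonneg γ)
    have : 0 ≤ (1 - metropolisAccept V z (z + γ)) * V z :=
      mul_nonneg (by linarith) (hVpos z).le
    nlinarith
  -- bound on f for integrability
  have hf_bd : ∀ γ : ℝ, f γ ≤ (Real.exp v + v) * ρ γ := by
    intro γ
    obtain ⟨h0, h1⟩ := hacc_mem γ
    have hAV : metropolisAccept V z (z + γ) * V (z + γ) ≤ Real.exp v := by
      have hle : metropolisAccept V z (z + γ) ≤ Real.exp (-(V (z + γ) - V z)) :=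
        min_le_right _ _
      calc metropolisAccept V z (z + γ) * V (z + γ)
          ≤ Real.exp (-(V (z + γ) - V z)) * V (z + γ) :=
            mul_le_mul_of_nonneg_right hle (hVpos _).le
        _ = Real.exp v * (V (z + γ) * Real.exp (-(V (z + γ)))) := by
            rw [show -(V (z + γ) - V z) = V z + (-(V (z + γ))) by ring, Real.exp_add]
            simp only [hvdef, hV]
            ring
        _ ≤ Real.exp v * Real.exp (-1) :=
            mul_le_mul_of_nonneg_left (xexp_le _) (Real.exp_nonneg _)
        _ ≤ Real.exp v * 1 := by
            apply mul_le_mul_of_nonneg_left _ (Real.exp_nonneg _)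
            rw [Real.exp_le_one_iff]; norm_num
        _ = Real.exp v := mul_one _
    have hBV : (1 - metropolisAccept V z (z + γ)) * V z ≤ v := by
      have hVz : V z = v := rfl
      nlinarith [hVpos z]
    calc f γ ≤ ρ γ * (Real.exp v + v) := by
          apply mul_le_mul_of_nonneg_left _ (hρnonneg γ)
          linarith
      _ = (Real.exp v + v) * ρ γ := by ring
  -- measurability of f
  have hVcont : Continuous V := by
    simp only [hV]; continuity
  have hacc_cont : Continuous fun γ => metropolisAccept V z (z + γ) := by
    unfold metropolisAccept
    apply Continuous.min continuous_const
    apply Real.continuous_exp.comp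
    continuity
  have hf_meas : AEStronglyMeasurable f volume := by
    apply Measurable.aestronglyMeasurable
    apply hρmeas.mul
    apply Measurable.add
    · exact (hacc_cont.mul (hVcont.comp (continuous_const.add continuous_id))).measurable
    · exact ((continuous_const.sub hacc_cont).mul continuous_const).measurable
  -- integrability of f
  have hf_int : Integrable f := by
    apply Integrable.mono' (hρint.const_mul (Real.exp v + v)) hf_meas
    filter_upwards with γ
    rw [Real.norm_eq_abs, abs_of_nonneg (hf_nonneg γ)]
    exact hf_bd γ
  -- the K integrand
  set k : ℝ → ℝ := fun γ => ρ γ *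
    (Real.exp (-v * (Real.exp (a * γ) - 1)) * (v * (Real.exp (a * γ) - 1))) with hk
  have hk_nonneg : ∀ γ ∈ Ioi (0:ℝ), 0 ≤ k γ := by
    intro γ hγ
    have h1 : (1 : ℝ) ≤ Real.exp (a * γ) := by
      rw [Real.one_le_exp_iff]
      exact mul_nonneg ha.le (le_of_lt hγ)
    apply mul_nonneg (hρnonneg γ)
    apply mul_nonneg (Real.exp_nonneg _)
    nlinarith
  have hk_bd : ∀ γ ∈ Ioi (0:ℝ), k γ ≤ Real.exp (-1) * ρ γ := by
    intro γ hγ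
    have h1 : (1 : ℝ) ≤ Real.exp (a * γ) := by
      rw [Real.one_le_exp_iff]
      exact mul_nonneg ha.le (le_of_lt hγ)
    set x := v * (Real.exp (a * γ) - 1) with hx
    have hxe : Real.exp (-v * (Real.exp (a * γ) - 1)) * x ≤ Real.exp (-1) := by
      rw [show -v * (Real.exp (a * γ) - 1) = -x by rw [hx]; ring]
      calc Real.exp (-x) * x = x * Real.exp (-x) := by ring
        _ ≤ Real.exp (-1) := xexp_le x
    calc k γ = ρ γ * (Real.exp (-v * (Real.exp (a * γ) - 1)) * x) := rfl
      _ ≤ ρ γ * Real.exp (-1) := mul_le_mul_of_nonneg_left hxe (hρnonneg γ)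
      _ = Real.exp (-1) * ρ γ := by ring
  have hk_meas : AEStronglyMeasurable k volume := by
    apply Measurable.aestronglyMeasurable
    apply hρmeas.mul
    have h1 : Continuous fun γ : ℝ => Real.exp (a * γ) - 1 :=
      (Real.continuous_exp.comp (continuous_const.mul continuous_id)).sub continuous_const
    exact ((Real.continuous_exp.comp (continuous_const.mul h1)).mul
      (continuous_const.mul h1)).measurable
  have hk_int : IntegrableOn k (Ioi (0:ℝ)) := by
    apply Integrable.mono' ((hρint.const_mul (Real.exp (-1))).restrict)
      hk_meas.restrict
    rw [ae_restrict_iff' measurableSet_Ioi]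
    filter_upwards with γ hγ
    rw [Real.norm_eq_abs, abs_of_nonneg (hk_nonneg γ hγ)]
    exact hk_bd γ hγ
  -- ∫_{Ioi 0} ρ = 1/2
  have hhalf : ∫ γ in Ioi (0:ℝ), ρ γ = 1 / 2 := by
    have hsym : ∫ γ in Iic (0:ℝ), ρ γ = ∫ γ in Ioi (0:ℝ), ρ γ := by
      have h := integral_comp_neg_Ioi (0:ℝ) ρ
      simp only [hsymm, neg_zero] at h
      exact h.symm
    have hsplit : (∫ γ in Iic (0:ℝ), ρ γ) + (∫ γ in Ioi (0:ℝ), ρ γ) = 1 := by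
      rw [intervalIntegral.integral_Iic_add_Ioi hρint.integrableOn hρint.integrableOn, hρnorm]
    linarith
  -- split the main integral
  have hsplit : metropolisOp ρ V z = (∫ γ in Iic (0:ℝ), f γ) + ∫ γ in Ioi (0:ℝ), f γ := by
    rw [metropolisOp, ← intervalIntegral.integral_Iic_add_Ioi hf_int.integrableOn hf_int.integrableOn]
  -- left piece
  have hleft : (∫ γ in Iic (0:ℝ), f γ)
      = v * ∫ γ in Ioi (0:ℝ), ρ γ * Real.exp (-a * γ) := by
    have h1 : (∫ γ in Iic (0:ℝ), f γ) = ∫ γ in Iic (0:ℝ), ρ γ * (v * Real.exp (a * γ)) := by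
      apply setIntegral_congr_fun measurableSet_Iic
      intro γ hγ
      simp only [hf]
      rw [hacc_le γ hγ, hVval γ]
      ring
    have h2 : (∫ γ in Iic (0:ℝ), ρ γ * (v * Real.exp (a * γ)))
        = ∫ γ in Ioi (0:ℝ), ρ γ * (v * Real.exp (-(a * γ))) := by
      rw [← neg_zero, ← integral_comp_neg_Ioi]
      simp only [hsymm, mul_neg, neg_zero]
    rw [h1, h2, ← integral_const_mul]
    apply setIntegral_congr_fun measurableSet_Ioi
    intro γ hγ
    ring_nf
  -- right piece
  have hright : (∫ γ in Ioi (0:ℝ), f γ) = v * (1 / 2) + ∫ γ in Ioi (0:ℝ), k γ := by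
    have h1 : (∫ γ in Ioi (0:ℝ), f γ) = ∫ γ in Ioi (0:ℝ), (v * ρ γ + k γ) := by
      apply setIntegral_congr_fun measurableSet_Ioi
      intro γ hγ
      simp only [hf, hk]
      rw [hacc_gt γ (le_of_lt hγ), hVval γ]
      have hVz : V z = v := rfl
      rw [hVz, show -v * (Real.exp (a * γ) - 1) = -(v * (Real.exp (a * γ) - 1)) by ring]
      ring
    rw [h1, integral_add ((hρint.const_mul v).restrict) hk_int, integral_const_mul, hhalf]
  -- assemble
  refine ⟨?_, ?_, ?_⟩
  · rw [hsplit, hleft, hright]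
    have hkeq : (∫ γ in Ioi (0:ℝ), k γ)
        = ∫ γ in Ioi (0 : ℝ), ρ γ
            * (Real.exp (-(c * Real.exp (a * z)) * (Real.exp (a * γ) - 1))
              * ((c * Real.exp (a * z)) * (Real.exp (a * γ) - 1))) := rfl
    rw [hkeq]
    ring
  · have : (0:ℝ) ≤ ∫ γ in Ioi (0:ℝ), k γ :=
      setIntegral_nonneg measurableSet_Ioi hk_nonneg
    exact this
  · have hmono : (∫ γ in Ioi (0:ℝ), k γ) ≤ ∫ γ in Ioi (0:ℝ), Real.exp (-1) * ρ γ :=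
      setIntegral_mono_on hk_int ((hρint.const_mul (Real.exp (-1))).restrict)
        measurableSet_Ioi hk_bd
    have heval : (∫ γ in Ioi (0:ℝ), Real.exp (-1) * ρ γ) = 1 / (2 * Real.exp 1) := by
      rw [integral_const_mul, hhalf, Real.exp_neg]
      field_simp
    calc (∫ γ in Ioi (0:ℝ), k γ) ≤ _ := hmono
      _ = 1 / (2 * Real.exp 1) := heval
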